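/- For real t with |t| < 1, ∑_{n=1}^∞ ζ(2n)·t^{2n}/n = log(πt / sin(πt)), equivalently ∑_{n=1}^∞ ζ(2n) t^{2n}/n = log Γ(1+t) + log Γ(1−t). -/

import Mathlib

/-!
Taking logarithms in Euler's product `sin (π t) / (π t) = ∏ₖ (1 - t² / (k + 1)²)` gives
`log (π t / sin (π t)) = ∑ₖ -log (1 - t² / (k + 1)²)`. Expanding each logarithm as
`∑ₙ x ^ (n + 1) / (n + 1)` and exchanging the two sums of nonnegative terms collects the
coefficient `∑ₖ (k + 1)^(-2(n+1)) = ζ(2(n+1))` in front of `t^(2(n+1)) / (n+1)`.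
The Gamma form is the reflection formula
`Γ(1 + t) Γ(1 - t) = t Γ(t) Γ(1 - t) = π t / sin (π t)`.
-/

open Real

lemma riemannZeta_natCast_eq_ofReal_tsum {m : ℕ} (hm : 1 < m) :
    riemannZeta m = ((∑' k : ℕ, 1 / ((k : ℝ) + 1) ^ m : ℝ) : ℂ) := by
  rw [zeta_eq_tsum_one_div_nat_add_one_cpow (by simpa using hm), Complex.ofReal_tsum]
  push_cast
  simp only [Complex.cpow_natCast]

lemma summable_sq_div_nat_add_one_sq (t : ℝ) :
    Summable (fun k : ℕ => t ^ 2 / ((k : ℝ) + 1) ^ 2) := by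
  have := (summable_nat_add_iff 1).mpr (Real.summable_one_div_nat_pow.mpr one_lt_two)
  simpa [div_eq_mul_inv] using this.mul_left (t ^ 2)

lemma sq_div_nat_add_one_sq_lt_one {t : ℝ} (ht : |t| < 1) (k : ℕ) :
    t ^ 2 / ((k : ℝ) + 1) ^ 2 < 1 := by
  rw [div_lt_one (by positivity)]
  calc t ^ 2 < 1 := (sq_lt_one_iff_abs_lt_one t).mpr ht
    _ ≤ ((k : ℝ) + 1) ^ 2 := one_le_pow₀ (by simp)

lemma Real.hasProd_one_sub_sq_div_sq {t : ℝ} (ht : t ≠ 0) :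
    HasProd (fun k : ℕ => 1 - t ^ 2 / ((k : ℝ) + 1) ^ 2) (sin (π * t) / (π * t)) := by
  have hmul : Multipliable (fun k : ℕ => 1 - t ^ 2 / ((k : ℝ) + 1) ^ 2) := by
    simpa only [sub_eq_add_neg] using
      Real.multipliable_one_add_of_summable (summable_sq_div_nat_add_one_sq t).neg
  rw [hmul.hasProd_iff_tendsto_nat]
  have hπt : π * t ≠ 0 := mul_ne_zero pi_ne_zero ht
  convert (tendsto_euler_sin_prod t).div_const (π * t) using 2 with N
  field_simp

lemma Real.hasSum_neg_log_one_sub_sq_div_sq {t : ℝ} (ht : |t| < 1) :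
    HasSum (fun k : ℕ => -log (1 - t ^ 2 / ((k : ℝ) + 1) ^ 2))
      (log (π * t / sin (π * t))) := by
  rcases eq_or_ne t 0 with rfl | ht0
  · simp
  have hpos (k : ℕ) : 0 < 1 - t ^ 2 / ((k : ℝ) + 1) ^ 2 :=
    sub_pos.mpr (sq_div_nat_add_one_sq_lt_one ht k)
  have hlog : Summable (fun k : ℕ => log (1 - t ^ 2 / ((k : ℝ) + 1) ^ 2)) := by
    simpa only [sub_eq_add_neg] using
      Real.summable_log_one_add_of_summable (summable_sq_div_nat_add_one_sq t).neg
  have hexp := Real.rexp_tsum_eq_tprod hpos hlog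
  rw [(hasProd_one_sub_sq_div_sq ht0).tprod_eq] at hexp
  rw [← inv_div, log_inv, ← hexp, log_exp]
  exact hlog.hasSum.neg

lemma hasSum_tsum_pow_div_of_hasSum_neg_log {ι : Type*} {x : ι → ℝ} {a : ℝ}
    (hx0 : ∀ k, 0 ≤ x k) (hx1 : ∀ k, x k < 1) (h : HasSum (fun k => -log (1 - x k)) a) :
    HasSum (fun n : ℕ => ∑' k, x k ^ (n + 1) / (n + 1)) a := by
  set f : ι × ℕ → ℝ := fun p => x p.1 ^ (p.2 + 1) / (p.2 + 1)
  have hfiber (k : ι) : HasSum (fun n : ℕ => f (k, n)) (-log (1 - x k)) :=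
    hasSum_pow_div_log_of_abs_lt_one (by rw [abs_of_nonneg (hx0 k)]; exact hx1 k)
  have hf : Summable f := by
    rw [summable_prod_of_nonneg (fun p => by have := hx0 p.1; positivity)]
    exact ⟨fun k => (hfiber k).summable, by simpa only [(hfiber _).tsum_eq] using h.summable⟩
  rw [h.unique (hf.hasSum.prod_fiberwise hfiber), ← (Equiv.prodComm ℕ ι).tsum_eq f]
  exact hf.prod_symm.hasSum.prod_fiberwise fun n => (hf.prod_symm.prod_factor n).hasSum

lemma Real.hasSum_tsum_one_div_pow_mul_pow_div {t : ℝ} (ht : |t| < 1) :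
    HasSum (fun n : ℕ =>
        (∑' k : ℕ, 1 / ((k : ℝ) + 1) ^ (2 * (n + 1))) * t ^ (2 * (n + 1)) / (n + 1))
      (log (π * t / sin (π * t))) := by
  convert hasSum_tsum_pow_div_of_hasSum_neg_log (fun k => by positivity)
    (sq_div_nat_add_one_sq_lt_one ht) (hasSum_neg_log_one_sub_sq_div_sq ht) using 2 with n
  rw [← tsum_mul_right, ← tsum_div_const]
  congr 1 with k
  rw [div_pow, ← pow_mul, ← pow_mul]
  ring

lemma Real.Gamma_one_add_mul_Gamma_one_sub {t : ℝ} (ht : t ≠ 0) :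
    Gamma (1 + t) * Gamma (1 - t) = π * t / sin (π * t) := by
  rw [add_comm, Gamma_add_one ht, mul_assoc, Gamma_mul_Gamma_one_sub]
  ring

lemma Real.log_Gamma_one_add_add_log_Gamma_one_sub {t : ℝ} (ht : |t| < 1) :
    log (Gamma (1 + t)) + log (Gamma (1 - t)) = log (π * t / sin (π * t)) := by
  rcases eq_or_ne t 0 with rfl | ht0
  · simp
  obtain ⟨hlt, hgt⟩ := abs_lt.mp ht
  rw [← Gamma_one_add_mul_Gamma_one_sub ht0,
    log_mul (Gamma_pos_of_pos (by linarith)).ne' (Gamma_pos_of_pos (by linarith)).ne']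

theorem zeta_even_series_log (t : ℝ) (ht : |t| < 1) :
    (∑' n : ℕ, riemannZeta ((2*(n+1) : ℕ) : ℂ) * (t : ℂ)^(2*(n+1)) / ((n:ℂ)+1)
        = ((Real.log (π * t / Real.sin (π * t)) : ℝ) : ℂ)) ∧
    (∑' n : ℕ, riemannZeta ((2*(n+1) : ℕ) : ℂ) * (t : ℂ)^(2*(n+1)) / ((n:ℂ)+1)
        = ((Real.log (Real.Gamma (1 + t)) + Real.log (Real.Gamma (1 - t)) : ℝ) : ℂ)) := by
  have hterm (n : ℕ) :
      riemannZeta ((2 * (n + 1) : ℕ) : ℂ) * (t : ℂ) ^ (2 * (n + 1)) / ((n : ℂ) + 1) =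
        (((∑' k : ℕ, 1 / ((k : ℝ) + 1) ^ (2 * (n + 1))) * t ^ (2 * (n + 1)) / (n + 1) : ℝ)
          : ℂ) := by
    rw [riemannZeta_natCast_eq_ofReal_tsum (by omega)]
    push_cast
    ring
  have hseries :
      ∑' n : ℕ, riemannZeta ((2*(n+1) : ℕ) : ℂ) * (t : ℂ)^(2*(n+1)) / ((n:ℂ)+1)
        = ((log (π * t / sin (π * t)) : ℝ) : ℂ) := by
    rw [tsum_congr hterm, ← Complex.ofReal_tsum,
      (hasSum_tsum_one_div_pow_mul_pow_div ht).tsum_eq]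
  exact ⟨hseries, by rw [hseries, log_Gamma_one_add_add_log_Gamma_one_sub ht]⟩
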